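/- arXiv:1711.02974 — 3 statements merged into one kernel-verified Lean document; each statement's English description precedes it below -/
import Mathlib

section
/- Let w ∈ ℝ^n with ‖w‖₁ > η > 0, and let v be the Euclidean projection of (|w₁|,…,|wₙ|) onto the simplex Δ_η = {u ∈ ℝ^n : u_i ≥ 0 for all i, ∑_i u_i = η}. Then the point (sign(w₁)v₁, …, sign(wₙ)vₙ) is the Euclidean projection of w onto the closed ℓ¹ ball of radius η. -/
/-!
Coordinatewise `|wᵢ - sign(wᵢ) vᵢ| ≤ ||wᵢ| - vᵢ|` and `||wᵢ| - |qᵢ|| ≤ |wᵢ - qᵢ|`, so everything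
reduces to comparing `|w|` with `|q|` for `q` in the ball. Since `‖q‖₁ ≤ η < ‖w‖₁`, the segment
from `|q|` to `|w|` crosses the simplex `Δ_η` at some `r`, which is no farther from `|w|` than
`|q|` is. Hence `‖w - sign(w) v‖ ≤ ‖|w| - v‖ ≤ ‖|w| - r‖ ≤ ‖|w| - |q|‖ ≤ ‖w - q‖`.
-/

/-- `p` is the Euclidean projection of `x` onto `C`: it belongs to `C` and
minimizes the Euclidean distance to `x` among points of `C`. -/
def IsProjOn {n : ℕ} (C : Set (EuclideanSpace ℝ (Fin n)))
    (x p : EuclideanSpace ℝ (Fin n)) : Prop :=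
  p ∈ C ∧ ∀ q ∈ C, ‖x - p‖ ≤ ‖x - q‖

open WithLp

lemma Real.abs_sign_mul_le (a b : ℝ) : |Real.sign a * b| ≤ |b| := by
  rcases Real.sign_apply_eq a with h | h | h <;> simp [h]

lemma Real.abs_sub_sign_mul_le (a b : ℝ) : |a - Real.sign a * b| ≤ |(|a| - b)| := by
  rcases lt_trichotomy a 0 with h | rfl | h
  · rw [Real.sign_of_neg h, abs_of_neg h, ← abs_neg]
    exact (congrArg abs (by ring)).le
  · simp
  · rw [Real.sign_of_pos h, abs_of_pos h, one_mul]

lemma abs_sub_add_mul_sub_le {a b t : ℝ} (ht₀ : 0 ≤ t) (ht₁ : t ≤ 1) :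
    |a - (b + t * (a - b))| ≤ |a - b| := by
  rw [show a - (b + t * (a - b)) = (1 - t) * (a - b) by ring, abs_mul, abs_of_nonneg (by linarith)]
  exact mul_le_of_le_one_left (abs_nonneg _) (by linarith)

lemma EuclideanSpace.norm_le_norm_of_abs_le {ι : Type*} [Fintype ι]
    {x y : EuclideanSpace ℝ ι} (h : ∀ i, |x i| ≤ |y i|) : ‖x‖ ≤ ‖y‖ := by
  simp only [EuclideanSpace.norm_eq, Real.norm_eq_abs]
  exact Real.sqrt_le_sqrt <| Finset.sum_le_sum fun i _ => pow_le_pow_left₀ (abs_nonneg _) (h i) 2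

def scaledSimplex (ι : Type*) [Fintype ι] (η : ℝ) : Set (EuclideanSpace ℝ ι) :=
  {u | (∀ i, 0 ≤ u i) ∧ ∑ i, u i = η}

section Simplex

variable {ι : Type*} [Fintype ι]

lemma sum_abs_toLp_sign_mul_le {η : ℝ} {w v : EuclideanSpace ℝ ι}
    (hv : v ∈ scaledSimplex ι η) : ∑ i, |toLp 2 (fun i => Real.sign (w i) * v i) i| ≤ η := by
  calc ∑ i, |toLp 2 (fun i => Real.sign (w i) * v i) i|
      ≤ ∑ i, v i := Finset.sum_le_sum fun i _ =>
        (Real.abs_sign_mul_le _ _).trans (abs_of_nonneg (hv.1 i)).le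
    _ = η := hv.2

lemma norm_sub_toLp_sign_mul_le (w v : EuclideanSpace ℝ ι) :
    ‖w - toLp 2 (fun i => Real.sign (w i) * v i)‖ ≤ ‖toLp 2 (fun i => |w i|) - v‖ :=
  EuclideanSpace.norm_le_norm_of_abs_le fun i => Real.abs_sub_sign_mul_le (w i) (v i)

lemma exists_mem_scaledSimplex_norm_abs_sub_le {η : ℝ} {w q : EuclideanSpace ℝ ι}
    (hq : ∑ i, |q i| ≤ η) (hw : η < ∑ i, |w i|) :
    ∃ r ∈ scaledSimplex ι η, ‖toLp 2 (fun i => |w i|) - r‖ ≤ ‖w - q‖ := by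
  set S := ∑ i, |q i|
  set A := ∑ i, |w i|
  have hAS : 0 < A - S := by linarith
  set t := (η - S) / (A - S)
  have ht₀ : 0 ≤ t := div_nonneg (by linarith) hAS.le
  have ht₁ : t ≤ 1 := (div_le_one hAS).mpr (by linarith)
  refine ⟨toLp 2 fun i => |q i| + t * (|w i| - |q i|), ⟨fun i => ?_, ?_⟩, ?_⟩
  · nlinarith [abs_nonneg (q i), abs_nonneg (w i)]
  · show ∑ i, (|q i| + t * (|w i| - |q i|)) = η
    rw [Finset.sum_add_distrib, ← Finset.mul_sum, Finset.sum_sub_distrib,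
      div_mul_cancel₀ _ hAS.ne']
    ring
  · refine EuclideanSpace.norm_le_norm_of_abs_le fun i => ?_
    exact (abs_sub_add_mul_sub_le ht₀ ht₁).trans (abs_abs_sub_abs_le (w i) (q i))

end Simplex

theorem stmt7_general (n : ℕ) (η : ℝ)
    (w v : EuclideanSpace ℝ (Fin n)) (hw : η < ∑ i, |w i|)
    (hv : IsProjOn {u | (∀ i, 0 ≤ u i) ∧ ∑ i, u i = η}
      ((WithLp.equiv 2 (Fin n → ℝ)).symm fun i => |w i|) v) :
    IsProjOn {u : EuclideanSpace ℝ (Fin n) | ∑ i, |u i| ≤ η} w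
      ((WithLp.equiv 2 (Fin n → ℝ)).symm fun i => Real.sign (w i) * v i) := by
  obtain ⟨hv_mem, hv_min⟩ := hv
  refine ⟨sum_abs_toLp_sign_mul_le hv_mem, fun q hq => ?_⟩
  obtain ⟨r, hr, hr_le⟩ := exists_mem_scaledSimplex_norm_abs_sub_le hq hw
  calc ‖w - toLp 2 fun i => Real.sign (w i) * v i‖
      ≤ ‖toLp 2 (fun i => |w i|) - v‖ := norm_sub_toLp_sign_mul_le w v
    _ ≤ ‖toLp 2 (fun i => |w i|) - r‖ := hv_min r hr
    _ ≤ ‖w - q‖ := hr_le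

/-- If `‖w‖₁ > η > 0` and `v` is the Euclidean projection of `(|w₁|,…,|wₙ|)` onto
the simplex `Δ_η`, then `(sign(w₁)v₁,…,sign(wₙ)vₙ)` is the Euclidean projection of
`w` onto the closed `ℓ¹` ball of radius `η`. -/
theorem stmt7 (n : ℕ) (η : ℝ) (hη : 0 < η)
    (w v : EuclideanSpace ℝ (Fin n)) (hw : η < ∑ i, |w i|)
    (hv : IsProjOn {u | (∀ i, 0 ≤ u i) ∧ ∑ i, u i = η}
      ((WithLp.equiv 2 (Fin n → ℝ)).symm fun i => |w i|) v) :
    IsProjOn {u : EuclideanSpace ℝ (Fin n) | ∑ i, |u i| ≤ η} w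
      ((WithLp.equiv 2 (Fin n → ℝ)).symm fun i => Real.sign (w i) * v i) :=
  stmt7_general n η w v hw hv
end

section
/- The Euclidean projection of a point x onto the simplex Δ_η = {u ∈ ℝ^n : u_i ≥ 0, ∑ u_i = η} has the form v_i = max(x_i − τ, 0) for a unique real number τ satisfying ∑_i max(x_i − τ, 0) = η. -/
open scoped RealInnerProductSpace

/-!
The map `τ ↦ ∑ i, max (x i - τ) 0` is continuous, vanishes for large `τ`, exceeds any `η ≥ 0`
for small `τ`, and is strictly decreasing wherever it is positive; so it takes the value `η > 0`
exactly once. For that `τ`, the point `w i = max (x i - τ) 0` lies on the simplex and satisfies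
the variational inequality `⟪x - w, w - q⟫ ≥ 0` for every `q` on the simplex: on the support of
`w` the residual `x i - w i` equals `τ`, and off it `x i < τ` while `q i ≥ 0`. The variational
inequality makes `w` the unique nearest point, hence `w = v`.
-/

section Threshold

variable {ι : Type*} [Fintype ι] (x : ι → ℝ)

theorem sum_max_sub_lt_sum_max_sub {τ₁ τ₂ : ℝ} (h : τ₁ < τ₂)
    (hpos : 0 < ∑ i, max (x i - τ₂) 0) :
    ∑ i, max (x i - τ₂) 0 < ∑ i, max (x i - τ₁) 0 := by
  obtain ⟨i, -, hi⟩ := Finset.exists_lt_of_sum_lt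
    (by simpa using hpos : ∑ _i, (0 : ℝ) < ∑ i, max (x i - τ₂) 0)
  have hxi : τ₂ < x i := by simpa using hi
  refine Finset.sum_lt_sum (fun j _ => max_le_max (by linarith) le_rfl) ⟨i, Finset.mem_univ i, ?_⟩
  rw [max_eq_left (by linarith), max_eq_left (by linarith)]
  linarith

theorem eq_of_sum_max_sub_eq {η τ₁ τ₂ : ℝ} (hη : 0 < η)
    (h₁ : ∑ i, max (x i - τ₁) 0 = η) (h₂ : ∑ i, max (x i - τ₂) 0 = η) : τ₁ = τ₂ := by
  refine le_antisymm (not_lt.mp fun h => ?_) (not_lt.mp fun h => ?_)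
  · have := sum_max_sub_lt_sum_max_sub x h (h₁ ▸ hη)
    linarith
  · have := sum_max_sub_lt_sum_max_sub x h (h₂ ▸ hη)
    linarith

theorem exists_sum_max_sub_eq [Nonempty ι] {η : ℝ} (hη : 0 ≤ η) :
    ∃ τ, ∑ i, max (x i - τ) 0 = η := by
  obtain ⟨i₀⟩ := ‹Nonempty ι›
  set M := Finset.univ.sup' Finset.univ_nonempty x
  have hle_M : ∀ i, x i ≤ M := fun i => Finset.le_sup' x (Finset.mem_univ i)
  have hcont : Continuous fun τ : ℝ => ∑ i, max (x i - τ) 0 := by fun_prop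
  have hM : ∑ i, max (x i - M) 0 = 0 :=
    Finset.sum_eq_zero fun i _ => max_eq_right (by linarith [hle_M i])
  have hlow : η ≤ ∑ i, max (x i - (x i₀ - η)) 0 :=
    calc η = max (x i₀ - (x i₀ - η)) 0 := by simp [hη]
      _ ≤ _ := Finset.single_le_sum (f := fun i => max (x i - (x i₀ - η)) 0)
          (fun i _ => le_max_right _ _) (Finset.mem_univ i₀)
  obtain ⟨τ, -, hτ⟩ := intermediate_value_Icc' (by linarith [hle_M i₀] : x i₀ - η ≤ M)
    hcont.continuousOn ⟨by simpa only [hM] using hη, hlow⟩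
  exact ⟨τ, hτ⟩

theorem sum_sub_max_mul_max_sub_nonneg (τ : ℝ) {q : ι → ℝ} (hq : ∀ i, 0 ≤ q i)
    (hsum : ∑ i, q i = ∑ i, max (x i - τ) 0) :
    0 ≤ ∑ i, (x i - max (x i - τ) 0) * (max (x i - τ) 0 - q i) := by
  have hterm : ∀ i, τ * (max (x i - τ) 0 - q i) ≤
      (x i - max (x i - τ) 0) * (max (x i - τ) 0 - q i) := by
    intro i
    rcases le_or_gt τ (x i) with h | h
    · rw [max_eq_left (by linarith)]
      exact le_of_eq (by ring)
    · rw [max_eq_right (by linarith)]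
      nlinarith [hq i]
  calc (0 : ℝ) = τ * (∑ i, max (x i - τ) 0 - ∑ i, q i) := by rw [hsum, sub_self, mul_zero]
    _ = ∑ i, τ * (max (x i - τ) 0 - q i) := by rw [← Finset.sum_sub_distrib, Finset.mul_sum]
    _ ≤ _ := Finset.sum_le_sum fun i _ => hterm i

end Threshold

theorem eq_of_norm_sub_le_of_inner_nonneg {F : Type*} [NormedAddCommGroup F]
    [InnerProductSpace ℝ F] {x v w : F} (hle : ‖x - v‖ ≤ ‖x - w‖)
    (hinner : 0 ≤ ⟪x - w, w - v⟫) : v = w := by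
  have hexpand : ‖x - v‖ ^ 2 = ‖x - w‖ ^ 2 + 2 * ⟪x - w, w - v⟫ + ‖w - v‖ ^ 2 := by
    rw [← norm_add_sq_real, sub_add_sub_cancel]
  have hsq : ‖x - v‖ ^ 2 ≤ ‖x - w‖ ^ 2 := pow_le_pow_left₀ (norm_nonneg _) hle 2
  have : ‖w - v‖ = 0 := by nlinarith [norm_nonneg (w - v)]
  exact (sub_eq_zero.mp (norm_eq_zero.mp this)).symm

/-- The Euclidean projection `v` of `x` onto the simplex `Δ_η` has the form
`v i = max (x i - τ) 0` for the unique real `τ` with `∑ i, max (x i - τ) 0 = η`. -/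
theorem stmt8 (n : ℕ) (η : ℝ) (hη : 0 < η)
    (x v : EuclideanSpace ℝ (Fin n))
    (hv : IsProjOn {u | (∀ i, 0 ≤ u i) ∧ ∑ i, u i = η} x v) :
    (∃! τ : ℝ, ∑ i, max (x i - τ) 0 = η) ∧
      ∃ τ : ℝ, (∑ i, max (x i - τ) 0 = η) ∧ ∀ i, v i = max (x i - τ) 0 := by
  obtain ⟨⟨hv0, hvs⟩, hvmin⟩ := hv
  have : Nonempty (Fin n) := by
    by_contra h
    rw [not_nonempty_iff] at h
    simp only [Finset.univ_eq_empty, Finset.sum_empty] at hvs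
    linarith
  obtain ⟨τ, hτ⟩ := exists_sum_max_sub_eq x hη.le
  refine ⟨⟨τ, hτ, fun τ' h' => eq_of_sum_max_sub_eq x hη h' hτ⟩, τ, hτ, ?_⟩
  set w : EuclideanSpace ℝ (Fin n) := WithLp.toLp 2 fun i => max (x i - τ) 0
  have hinner : 0 ≤ ⟪x - w, w - v⟫ := by
    rw [PiLp.inner_apply]
    simpa [w, mul_comm] using sum_sub_max_mul_max_sub_nonneg x τ hv0 (hvs.trans hτ.symm)
  have hvw : v = w :=
    eq_of_norm_sub_le_of_inner_nonneg (hvmin w ⟨fun i => le_max_right _ _, hτ⟩) hinner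
  exact fun i => by rw [hvw]
end

section
/- Let φ : ℝ^n → ℝ be convex and differentiable with β-Lipschitz gradient, C nonempty closed convex with a minimizer w* of φ over C, and let 0 < γ ≤ 1/β. Then the projected gradient iterates w_{k+1} = P_C(w_k − γ∇φ(w_k)) satisfy φ(w_k) − φ(w*) ≤ ‖w_0 − w*‖² / (2γk) for all k ≥ 1. -/
open RealInnerProductSpace

section

variable {E : Type*} [NormedAddCommGroup E] [InnerProductSpace ℝ E] [CompleteSpace E]
  {φ : E → ℝ}

theorem HasGradientAt.hasDerivAt_comp_add_smul {g x v : E} {t : ℝ}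
    (h : HasGradientAt φ g (x + t • v)) :
    HasDerivAt (fun s : ℝ => φ (x + s • v)) ⟪g, v⟫ t := by
  have hline : HasDerivAt (fun s : ℝ => x + s • v) v t := by
    simpa using ((hasDerivAt_id t).smul_const v).const_add x
  have := h.hasFDerivAt.comp_hasDerivAt t hline
  simp only [InnerProductSpace.toDual_apply_apply] at this
  exact this

theorem ConvexOn.add_inner_le_of_hasGradientAt {s : Set E} (hφ : ConvexOn ℝ s φ) {g x z : E}
    (hx : x ∈ s) (hz : z ∈ s) (h : HasGradientAt φ g x) :
    φ x + ⟪g, z - x⟫ ≤ φ z := by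
  have hline : ConvexOn ℝ (AffineMap.lineMap x z ⁻¹' s) fun t : ℝ => φ (x + t • (z - x)) := by
    have hcomp : φ ∘ AffineMap.lineMap x z = fun t : ℝ => φ (x + t • (z - x)) := by
      funext t
      simp [AffineMap.lineMap_apply, add_comm]
    simpa only [hcomp] using hφ.comp_affineMap (AffineMap.lineMap x z)
  have hderiv : HasDerivAt (fun t : ℝ => φ (x + t • (z - x))) ⟪g, z - x⟫ 0 :=
    HasGradientAt.hasDerivAt_comp_add_smul (by simpa using h)
  have := hline.le_slope_of_hasDerivAt (by simpa using hx) (by simpa using hz) one_pos hderiv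
  simp only [slope_def_field, one_smul, add_sub_cancel, zero_smul, add_zero, sub_zero, div_one]
    at this
  linarith

theorem le_add_inner_add_sq_of_lipschitz_gradient {g : E → E}
    (hg : ∀ x, HasGradientAt φ (g x) x) {β : ℝ} (hLip : ∀ x y, ‖g x - g y‖ ≤ β * ‖x - y‖)
    (x y : E) : φ y ≤ φ x + ⟪g x, y - x⟫ + β / 2 * ‖y - x‖ ^ 2 := by
  set v := y - x
  have hderiv (t : ℝ) : HasDerivAt (fun s : ℝ => φ (x + s • v)) ⟪g (x + t • v), v⟫ t :=
    (hg _).hasDerivAt_comp_add_smul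
  have hbound (t : ℝ) : HasDerivAt (fun s : ℝ => φ x + s * ⟪g x, v⟫ + β / 2 * ‖v‖ ^ 2 * s ^ 2)
      (⟪g x, v⟫ + β * ‖v‖ ^ 2 * t) t :=
    ((((hasDerivAt_id' t).mul_const ⟪g x, v⟫).const_add (φ x)).add
      ((hasDerivAt_pow 2 t).const_mul (β / 2 * ‖v‖ ^ 2))).congr_deriv (by ring)
  have hslope : ∀ t ∈ Set.Ico (0 : ℝ) 1, ⟪g (x + t • v), v⟫ ≤ ⟪g x, v⟫ + β * ‖v‖ ^ 2 * t := by
    intro t ht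
    calc ⟪g (x + t • v), v⟫ = ⟪g x, v⟫ + ⟪g (x + t • v) - g x, v⟫ := by
          rw [inner_sub_left]; ring
      _ ≤ ⟪g x, v⟫ + ‖g (x + t • v) - g x‖ * ‖v‖ := by gcongr; exact real_inner_le_norm _ _
      _ ≤ ⟪g x, v⟫ + β * ‖t • v‖ * ‖v‖ := by
          gcongr; simpa using hLip (x + t • v) x
      _ = ⟪g x, v⟫ + β * ‖v‖ ^ 2 * t := by
          rw [norm_smul, Real.norm_of_nonneg ht.1]; ring
  have := image_le_of_deriv_right_le_deriv_boundary
    (fun t _ => (hderiv t).continuousAt.continuousWithinAt)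
    (fun t _ => (hderiv t).hasDerivWithinAt) (by simp)
    (fun t _ => (hbound t).continuousAt.continuousWithinAt)
    (fun t _ => (hbound t).hasDerivWithinAt) hslope (Set.right_mem_Icc.2 zero_le_one)
  simpa [v] using this

theorem two_mul_sub_le_of_projected_gradient_step (hφ : ConvexOn ℝ Set.univ φ) {g : E → E}
    (hg : ∀ x, HasGradientAt φ (g x) x) {β : ℝ} (hLip : ∀ x y, ‖g x - g y‖ ≤ β * ‖x - y‖)
    {γ : ℝ} (hγ : 0 ≤ γ) (hβγ : β * γ ≤ 1) {a p z : E}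
    (hproj : ⟪a - γ • g a - p, z - p⟫ ≤ 0) :
    2 * γ * (φ p - φ z) ≤ ‖a - z‖ ^ 2 - ‖p - z‖ ^ 2 := by
  have hdescent := le_add_inner_add_sq_of_lipschitz_gradient hg hLip a p
  have hconvex := hφ.add_inner_le_of_hasGradientAt (Set.mem_univ a) (Set.mem_univ z) (hg a)
  have hvi : ⟪a - p, z - p⟫ ≤ γ * ⟪g a, z - p⟫ := by
    rw [sub_right_comm, inner_sub_left, real_inner_smul_left] at hproj
    linarith
  have hsplit : ‖a - z‖ ^ 2 = ‖a - p‖ ^ 2 - 2 * ⟪a - p, z - p⟫ + ‖p - z‖ ^ 2 := by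
    rw [← sub_sub_sub_cancel_right a z p, norm_sub_sq_real, norm_sub_rev z p]
  have hgrad : ⟪g a, p - a⟫ - ⟪g a, z - a⟫ = -⟪g a, z - p⟫ := by
    rw [← inner_sub_right, ← inner_neg_right, neg_sub, sub_sub_sub_cancel_right]
  have hquad : γ * (β * ‖p - a‖ ^ 2) ≤ ‖a - p‖ ^ 2 := by
    rw [norm_sub_rev, ← mul_assoc, mul_comm γ β]
    exact mul_le_of_le_one_left (sq_nonneg _) hβγ
  nlinarith

end

theorem Antitone.nat_mul_le_of_le_sub_succ {e d : ℕ → ℝ} (he : Antitone e)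
    (hd : ∀ k, 0 ≤ d k) (hstep : ∀ k, e (k + 1) ≤ d k - d (k + 1)) (l : ℕ) :
    l * e l ≤ d 0 := by
  calc (l : ℝ) * e l = ∑ _j ∈ Finset.range l, e l := by simp
    _ ≤ ∑ j ∈ Finset.range l, e (j + 1) :=
        Finset.sum_le_sum fun j hj => he (Finset.mem_range.mp hj)
    _ ≤ ∑ j ∈ Finset.range l, (d j - d (j + 1)) := Finset.sum_le_sum fun j _ => hstep j
    _ = d 0 - d l := Finset.sum_range_sub' d l
    _ ≤ d 0 := sub_le_self _ (hd l)

theorem IsProjOn.inner_sub_le_zero {n : ℕ} {C : Set (EuclideanSpace ℝ (Fin n))}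
    (hC : Convex ℝ C) {x p : EuclideanSpace ℝ (Fin n)} (h : IsProjOn C x p) :
    ∀ q ∈ C, ⟪x - p, q - p⟫ ≤ 0 := by
  have : Nonempty C := ⟨⟨p, h.1⟩⟩
  refine (norm_eq_iInf_iff_real_inner_le_zero hC h.1).mp (le_antisymm ?_ ?_)
  · exact le_ciInf fun q => h.2 q q.2
  · have hbdd : BddBelow (Set.range fun q : C => ‖x - q‖) :=
      ⟨0, by rintro _ ⟨q, rfl⟩; exact norm_nonneg _⟩
    exact ciInf_le hbdd ⟨p, h.1⟩

theorem stmt11_general (n : ℕ) (C : Set (EuclideanSpace ℝ (Fin n)))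
    (hCcv : Convex ℝ C)
    (φ : EuclideanSpace ℝ (Fin n) → ℝ) (hφ : ConvexOn ℝ Set.univ φ)
    (g : EuclideanSpace ℝ (Fin n) → EuclideanSpace ℝ (Fin n))
    (hg : ∀ x, HasGradientAt φ (g x) x)
    (β : ℝ) (hβ : 0 < β) (hLip : ∀ x y, ‖g x - g y‖ ≤ β * ‖x - y‖)
    (wstar : EuclideanSpace ℝ (Fin n)) (hws : wstar ∈ C)
    (γ : ℝ) (hγ0 : 0 < γ) (hγ : γ ≤ 1 / β)
    (w : ℕ → EuclideanSpace ℝ (Fin n)) (hw0 : w 0 ∈ C)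
    (hw : ∀ l, IsProjOn C (w l - γ • g (w l)) (w (l + 1))) :
    ∀ l : ℕ, 1 ≤ l → φ (w l) - φ wstar ≤ ‖w 0 - wstar‖ ^ 2 / (2 * γ * l) := by
  intro l hl
  have hβγ : β * γ ≤ 1 := by rwa [le_div_iff₀ hβ, mul_comm] at hγ
  have hmem : ∀ k, w k ∈ C := fun
    | 0 => hw0
    | k + 1 => (hw k).1
  have hstep : ∀ k, ∀ z ∈ C,
      2 * γ * (φ (w (k + 1)) - φ z) ≤ ‖w k - z‖ ^ 2 - ‖w (k + 1) - z‖ ^ 2 := fun k z hz =>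
    two_mul_sub_le_of_projected_gradient_step hφ hg hLip hγ0.le hβγ
      ((hw k).inner_sub_le_zero hCcv z hz)
  have hanti : Antitone fun k => 2 * γ * (φ (w k) - φ wstar) := by
    refine antitone_nat_of_succ_le fun k => ?_
    have := hstep k (w k) (hmem k)
    rw [sub_self, norm_zero] at this
    linarith [sq_nonneg ‖w (k + 1) - w k‖]
  have hrate := hanti.nat_mul_le_of_le_sub_succ (fun k => sq_nonneg ‖w k - wstar‖)
    (fun k => hstep k wstar hws) l
  have hl' : (0 : ℝ) < l := by exact_mod_cast hl
  rw [le_div_iff₀ (by positivity)]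
  linarith

/-- `O(1/k)` rate of the exact projected gradient method: with step
`0 < γ ≤ 1/β`, the iterates `w_{k+1} = P_C(w_k − γ∇φ(w_k))` started in `C`
satisfy `φ(w_k) − φ(w*) ≤ ‖w_0 − w*‖²/(2γk)` for every `k ≥ 1`. -/
theorem stmt11 (n : ℕ) (C : Set (EuclideanSpace ℝ (Fin n)))
    (hCne : C.Nonempty) (hCcl : IsClosed C) (hCcv : Convex ℝ C)
    (φ : EuclideanSpace ℝ (Fin n) → ℝ) (hφ : ConvexOn ℝ Set.univ φ)
    (g : EuclideanSpace ℝ (Fin n) → EuclideanSpace ℝ (Fin n))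
    (hg : ∀ x, HasGradientAt φ (g x) x)
    (β : ℝ) (hβ : 0 < β) (hLip : ∀ x y, ‖g x - g y‖ ≤ β * ‖x - y‖)
    (wstar : EuclideanSpace ℝ (Fin n)) (hws : wstar ∈ C)
    (hmin : ∀ u ∈ C, φ wstar ≤ φ u)
    (γ : ℝ) (hγ0 : 0 < γ) (hγ : γ ≤ 1 / β)
    (w : ℕ → EuclideanSpace ℝ (Fin n)) (hw0 : w 0 ∈ C)
    (hw : ∀ l, IsProjOn C (w l - γ • g (w l)) (w (l + 1))) :
    ∀ l : ℕ, 1 ≤ l → φ (w l) - φ wstar ≤ ‖w 0 - wstar‖ ^ 2 / (2 * γ * l) :=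
  stmt11_general n C hCcv φ hφ g hg β hβ hLip wstar hws γ hγ0 hγ w hw0 hw
end
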